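/- For all x, y ∈ ℝ with x ≠ 0, setting (a,b) = R(x,y) = (x⁻², yx³ + x²), one has t(a,b) = xy, h-value t(a,b)(a·t(a,b) + 1) = (x + y)y, and f-value (a·t(a,b) + 1)²(t(a,b)² + b) = (x + y)²(y² + xy + 1). In particular P∘R and Q∘R extend to polynomial functions of (x,y). -/

import Mathlib

open MvPolynomial

/-- `t = xy − 1`. -/
noncomputable def tF (x y : ℝ) : ℝ := x * y - 1

/-- `h = t(xt + 1)`. -/
noncomputable def hF (x y : ℝ) : ℝ := tF x y * (x * tF x y + 1)

/-- `f = (xt + 1)²(t² + y)`. -/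
noncomputable def fF (x y : ℝ) : ℝ := (x * tF x y + 1) ^ 2 * (tF x y ^ 2 + y)

/-- `P = f + h`. -/
noncomputable def PF (x y : ℝ) : ℝ := fF x y + hF x y

/-- The auxiliary polynomial `u(f,h)`. -/
noncomputable def uF (f h : ℝ) : ℝ :=
  170 * f * h + 91 * h ^ 2 + 195 * f * h ^ 2 + 69 * h ^ 3 + 75 * f * h ^ 3 + (75 / 4) * h ^ 4

/-- `Q = −t² − 6th(h + 1) − u(f,h)`. -/
noncomputable def QF (x y : ℝ) : ℝ :=
  -tF x y ^ 2 - 6 * tF x y * hF x y * (hF x y + 1) - uF (fF x y) (hF x y)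

section Substitution

variable {x : ℝ} (y : ℝ) (hx : x ≠ 0)
include hx

theorem tF_subst : tF (x⁻¹ ^ 2) (y * x ^ 3 + x ^ 2) = x * y := by
  unfold tF
  field_simp
  ring

/-- Along `R`, the factor `a t + 1` becomes `(x + y) / x`; the pole cancels against `t = xy`
in `h` and against `t² + b = x²(y² + xy + 1)` in `f`. -/
theorem mul_tF_add_one_subst :
    x⁻¹ ^ 2 * tF (x⁻¹ ^ 2) (y * x ^ 3 + x ^ 2) + 1 = (x + y) / x := by
  rw [tF_subst y hx]
  field_simp
  ring

theorem hF_subst : hF (x⁻¹ ^ 2) (y * x ^ 3 + x ^ 2) = (x + y) * y := by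
  rw [hF, mul_tF_add_one_subst y hx, tF_subst y hx]
  field_simp

theorem fF_subst :
    fF (x⁻¹ ^ 2) (y * x ^ 3 + x ^ 2) = (x + y) ^ 2 * (y ^ 2 + x * y + 1) := by
  rw [fF, mul_tF_add_one_subst y hx, tF_subst y hx]
  field_simp
  ring

end Substitution

section QPoly

variable {σ : Type*} (p : σ → ℝ) (T H F : MvPolynomial σ ℝ)

noncomputable def qPoly : MvPolynomial σ ℝ :=
  -T ^ 2 - 6 * T * H * (H + 1) -
    (170 * F * H + 91 * H ^ 2 + 195 * F * H ^ 2 + 69 * H ^ 3 + 75 * F * H ^ 3 +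
      C (75 / 4) * H ^ 4)

theorem eval_qPoly :
    eval p (qPoly T H F) =
      -eval p T ^ 2 - 6 * eval p T * eval p H * (eval p H + 1) - uF (eval p F) (eval p H) := by
  simp [qPoly, uF]

end QPoly

/-- Along `R(x,y) = (x⁻², yx³ + x²)` (for `x ≠ 0`), the values of `t`, `h`, `f`
are the polynomials `xy`, `(x+y)y`, `(x+y)²(y²+xy+1)`; in particular `P ∘ R`
and `Q ∘ R` extend to polynomial functions of `(x,y)`. -/
theorem pinchuk_double_asymptotic_substitution :
    (∀ x y : ℝ, x ≠ 0 →
      tF (x⁻¹ ^ 2) (y * x ^ 3 + x ^ 2) = x * y ∧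
      hF (x⁻¹ ^ 2) (y * x ^ 3 + x ^ 2) = (x + y) * y ∧
      fF (x⁻¹ ^ 2) (y * x ^ 3 + x ^ 2) = (x + y) ^ 2 * (y ^ 2 + x * y + 1)) ∧
    (∃ G₁ G₂ : MvPolynomial (Fin 2) ℝ, ∀ x y : ℝ, x ≠ 0 →
      PF (x⁻¹ ^ 2) (y * x ^ 3 + x ^ 2) = eval ![x, y] G₁ ∧
      QF (x⁻¹ ^ 2) (y * x ^ 3 + x ^ 2) = eval ![x, y] G₂) := by
  refine ⟨fun x y hx => ⟨tF_subst y hx, hF_subst y hx, fF_subst y hx⟩, ?_⟩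
  let T : MvPolynomial (Fin 2) ℝ := X 0 * X 1
  let H : MvPolynomial (Fin 2) ℝ := (X 0 + X 1) * X 1
  let F : MvPolynomial (Fin 2) ℝ := (X 0 + X 1) ^ 2 * (X 1 ^ 2 + X 0 * X 1 + 1)
  refine ⟨F + H, qPoly T H F, fun x y hx => ⟨?_, ?_⟩⟩
  · rw [PF, fF_subst y hx, hF_subst y hx]
    simp [H, F]
  · rw [eval_qPoly, QF, tF_subst y hx, fF_subst y hx, hF_subst y hx]
    simp [T, H, F]
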